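/- For every d ≥ 1 and all x, y in the simplex S_d, ∫₀¹ ‖Ψ(u, x) − Ψ(u, y)‖₂² du ≤ 2 d^{3/2} ‖x − y‖₂, where ‖·‖₂ denotes the Euclidean norm on ℝ^d. -/

import Mathlib

/-! Write `Ψ_i(·, x) − Ψ_i(·, y) = g − ∫₀¹ g` with `g = 1_I − 1_J`, `I = (S_{i−1}^x, S_i^x]`,
`J = (S_{i−1}^y, S_i^y]`. Its squared L² norm on `[0,1]` is a variance, hence at most
`∫ g² = |I ∆ J|`, and `I ∆ J` is covered by the intervals between the left and between the right
endpoints. So the `i`-th coordinate contributes at most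
`|S_{i−1}^x − S_{i−1}^y| + |S_i^x − S_i^y| ≤ 2 √d ‖x − y‖₂` (Cauchy–Schwarz), and summing over
the `d` coordinates gives `2 d^{3/2} ‖x − y‖₂`. -/

open MeasureTheory

/-- Partial sum `S_i^x = x_1 + ⋯ + x_i` of the first `i` coordinates of `x : ℝ^d`. -/
def partSum {d : ℕ} (x : Fin d → ℝ) (i : ℕ) : ℝ :=
  ∑ j ∈ Finset.univ.filter (fun j : Fin d => (j : ℕ) < i), x j

/-- The vector field `Ψ(u, x)` whose `i`-th component is
`1_{(S_{i-1}^x, S_i^x]}(u) − x_i`. -/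
noncomputable def Psi {d : ℕ} (x : Fin d → ℝ) (u : ℝ) (i : Fin d) : ℝ :=
  (if u ∈ Set.Ioc (partSum x (i : ℕ)) (partSum x ((i : ℕ) + 1)) then (1 : ℝ) else 0) - x i

open ProbabilityTheory Set

lemma integral_sq_sub_integral_le_integral_sq {Ω : Type*} [MeasurableSpace Ω] {μ : Measure Ω}
    [IsProbabilityMeasure μ] {X : Ω → ℝ} (hX : AEStronglyMeasurable X μ) :
    ∫ ω, (X ω - μ[X]) ^ 2 ∂μ ≤ ∫ ω, X ω ^ 2 ∂μ := by
  rw [← variance_eq_integral hX.aemeasurable]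
  exact variance_le_expectation_sq hX

instance : IsProbabilityMeasure (volume.restrict (Ioc (0 : ℝ) 1)) := ⟨by simp⟩

lemma sq_indicator_Ioc_sub_indicator_Ioc_le (a b a' b' u : ℝ) :
    ((Ioc a b).indicator (1 : ℝ → ℝ) u - (Ioc a' b').indicator 1 u) ^ 2
      ≤ (uIoc a a').indicator 1 u + (uIoc b b').indicator 1 u := by
  classical
  simp only [indicator_apply, mem_Ioc, mem_uIoc, Pi.one_apply]
  split_ifs <;> norm_num <;> grind

lemma measureReal_restrict_uIoc_le (s : Set ℝ) (a b : ℝ) :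
    (volume.restrict s).real (uIoc a b) ≤ |a - b| := by
  rw [measureReal_restrict_apply measurableSet_uIoc]
  refine (measureReal_mono inter_subset_left measure_Ioc_lt_top.ne).trans_eq ?_
  rw [Real.volume_real_Ioc_of_le min_le_max, max_sub_min_eq_abs, abs_sub_comm]

lemma integral_sq_indicator_Ioc_sub_indicator_Ioc_le (s : Set ℝ) (a b a' b' : ℝ) :
    ∫ u in s, ((Ioc a b).indicator (1 : ℝ → ℝ) u - (Ioc a' b').indicator 1 u) ^ 2
      ≤ |a - a'| + |b - b'| := by
  have hint : ∀ p q : ℝ, Integrable ((uIoc p q).indicator (1 : ℝ → ℝ)) (volume.restrict s) :=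
    fun p q => (integrable_indicator_iff measurableSet_uIoc).2
      (integrableOn_const measure_Ioc_lt_top.ne)
  calc _ ≤ ∫ u in s, ((uIoc a a').indicator 1 u + (uIoc b b').indicator 1 u) :=
        integral_mono_of_nonneg (ae_of_all _ fun u => sq_nonneg _) ((hint a a').add (hint b b'))
          (ae_of_all _ fun u => sq_indicator_Ioc_sub_indicator_Ioc_le a b a' b' u)
    _ ≤ |a - a'| + |b - b'| := by
        rw [integral_add (hint a a') (hint b b'), integral_indicator_one measurableSet_uIoc,
          integral_indicator_one measurableSet_uIoc]
        exact add_le_add (measureReal_restrict_uIoc_le s a a')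
          (measureReal_restrict_uIoc_le s b b')

lemma integral_indicator_Ioc_of_subset {a b : ℝ} (ha : 0 ≤ a) (hab : a ≤ b) (hb : b ≤ 1) :
    ∫ u in Ioc 0 1, (Ioc a b).indicator 1 u = b - a := by
  rw [integral_indicator_one measurableSet_Ioc, measureReal_restrict_apply measurableSet_Ioc,
    inter_eq_left.2 (Ioc_subset_Ioc ha hb), Real.volume_real_Ioc_of_le hab]

lemma integral_sq_centered_indicator_Ioc_sub_le {a b a' b' : ℝ} (ha : 0 ≤ a) (hab : a ≤ b)
    (hb : b ≤ 1) (ha' : 0 ≤ a') (hab' : a' ≤ b') (hb' : b' ≤ 1) :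
    ∫ u in Ioc 0 1, ((Ioc a b).indicator (1 : ℝ → ℝ) u - (b - a)
      - ((Ioc a' b').indicator 1 u - (b' - a'))) ^ 2 ≤ |a - a'| + |b - b'| := by
  set g : ℝ → ℝ := fun u => (Ioc a b).indicator 1 u - (Ioc a' b').indicator 1 u
  have hint : ∀ p q : ℝ,
      Integrable ((Ioc p q).indicator (1 : ℝ → ℝ)) (volume.restrict (Ioc 0 1)) :=
    fun p q => (integrable_const 1).indicator measurableSet_Ioc
  have hmean : ∫ u in Ioc 0 1, g u = (b - a) - (b' - a') := by
    rw [integral_sub (hint a b) (hint a' b'), integral_indicator_Ioc_of_subset ha hab hb,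
      integral_indicator_Ioc_of_subset ha' hab' hb']
  calc _ = ∫ u in Ioc 0 1, (g u - ∫ v in Ioc 0 1, g v) ^ 2 := by
        rw [hmean]; congr 1; ext u; ring
    _ ≤ ∫ u in Ioc 0 1, g u ^ 2 :=
        integral_sq_sub_integral_le_integral_sq ((hint a b).sub (hint a' b')).aestronglyMeasurable
    _ ≤ _ := integral_sq_indicator_Ioc_sub_indicator_Ioc_le _ a b a' b'

lemma sum_abs_le_sqrt_card_mul_sqrt_sum_sq {ι : Type*} [Fintype ι] (v : ι → ℝ) :
    ∑ i, |v i| ≤ √(Fintype.card ι) * √(∑ i, v i ^ 2) := by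
  simpa using Real.sum_mul_le_sqrt_mul_sqrt Finset.univ (fun _ => 1) (fun i => |v i|)

open Finset in
lemma partSum_succ {d : ℕ} (x : Fin d → ℝ) (i : Fin d) :
    partSum x (i + 1) = partSum x i + x i := by
  have : univ.filter (fun j : Fin d => (j : ℕ) < i + 1)
      = insert i (univ.filter fun j : Fin d => (j : ℕ) < i) := by
    ext j
    simp only [Finset.mem_filter, Finset.mem_univ, true_and, Finset.mem_insert, Fin.ext_iff]
    omega
  rw [partSum, this, sum_insert (by simp), add_comm]
  rfl

lemma partSum_nonneg {d : ℕ} {x : Fin d → ℝ} (hx : x ∈ stdSimplex ℝ (Fin d)) (k : ℕ) :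
    0 ≤ partSum x k :=
  Finset.sum_nonneg fun j _ => hx.1 j

lemma partSum_le_one {d : ℕ} {x : Fin d → ℝ} (hx : x ∈ stdSimplex ℝ (Fin d)) (k : ℕ) :
    partSum x k ≤ 1 :=
  (Finset.sum_le_sum_of_subset_of_nonneg (Finset.filter_subset _ _) fun j _ _ => hx.1 j).trans_eq
    hx.2

lemma partSum_le_partSum_succ {d : ℕ} {x : Fin d → ℝ} (hx : x ∈ stdSimplex ℝ (Fin d))
    (i : Fin d) :
    partSum x i ≤ partSum x (i + 1) := by
  rw [partSum_succ]
  exact le_add_of_nonneg_right (hx.1 i)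

open Finset in
lemma abs_partSum_sub_partSum_le {d : ℕ} (x y : Fin d → ℝ) (k : ℕ) :
    |partSum x k - partSum y k| ≤ √d * √(∑ i, (x i - y i) ^ 2) :=
  calc |partSum x k - partSum y k|
      = |∑ j ∈ univ.filter (fun j : Fin d => (j : ℕ) < k), (x j - y j)| := by
        rw [partSum, partSum, sum_sub_distrib]
    _ ≤ ∑ j ∈ univ.filter (fun j : Fin d => (j : ℕ) < k), |x j - y j| := abs_sum_le_sum_abs _ _
    _ ≤ ∑ j, |x j - y j| :=
        sum_le_sum_of_subset_of_nonneg (filter_subset _ _) fun _ _ _ => abs_nonneg _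
    _ ≤ √d * √(∑ i, (x i - y i) ^ 2) := by
        simpa using sum_abs_le_sqrt_card_mul_sqrt_sum_sq (x - y)

lemma Psi_eq_indicator_sub {d : ℕ} (x : Fin d → ℝ) (u : ℝ) (i : Fin d) :
    Psi x u i = (Ioc (partSum x i) (partSum x (i + 1))).indicator 1 u - x i := by
  simp [Psi, indicator_apply]

lemma memLp_Psi {d : ℕ} (μ : Measure ℝ) [IsFiniteMeasure μ] (x : Fin d → ℝ) (i : Fin d) :
    MemLp (fun u => Psi x u i) 2 μ := by
  simp_rw [Psi_eq_indicator_sub]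
  exact (memLp_indicator_const 2 measurableSet_Ioc 1 (Or.inr (measure_ne_top μ _))).sub
    (memLp_const _)

lemma integral_sq_Psi_sub_Psi_le {d : ℕ} {x y : Fin d → ℝ} (hx : x ∈ stdSimplex ℝ (Fin d))
    (hy : y ∈ stdSimplex ℝ (Fin d)) (i : Fin d) :
    ∫ u in (0 : ℝ)..1, (Psi x u i - Psi y u i) ^ 2
      ≤ |partSum x i - partSum y i| + |partSum x (i + 1) - partSum y (i + 1)| := by
  have hx_i : x i = partSum x (i + 1) - partSum x i := by rw [partSum_succ]; ring
  have hy_i : y i = partSum y (i + 1) - partSum y i := by rw [partSum_succ]; ring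
  simp_rw [intervalIntegral.integral_of_le zero_le_one, Psi_eq_indicator_sub, hx_i, hy_i]
  exact integral_sq_centered_indicator_Ioc_sub_le (partSum_nonneg hx _)
    (partSum_le_partSum_succ hx i) (partSum_le_one hx _) (partSum_nonneg hy _)
    (partSum_le_partSum_succ hy i) (partSum_le_one hy _)

theorem integral_sq_norm_Psi_sub_le_general
    (d : ℕ) (x y : Fin d → ℝ)
    (hx : x ∈ stdSimplex ℝ (Fin d)) (hy : y ∈ stdSimplex ℝ (Fin d)) :
    ∫ u in (0:ℝ)..1, (∑ i, (Psi x u i - Psi y u i) ^ 2)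
      ≤ 2 * (d : ℝ) ^ ((3 : ℝ) / 2) * Real.sqrt (∑ i, (x i - y i) ^ 2) := by
  have hint : ∀ i, IntervalIntegrable (fun u => (Psi x u i - Psi y u i) ^ 2) volume 0 1 :=
    fun i => (intervalIntegrable_iff_integrableOn_Ioc_of_le zero_le_one).2
      ((memLp_Psi _ x i).sub (memLp_Psi _ y i)).integrable_sq
  have hpow : (d : ℝ) ^ ((3 : ℝ) / 2) = d * √d := by
    rw [show (3 : ℝ) / 2 = 1 + 1 / 2 by norm_num, Real.rpow_add' d.cast_nonneg (by norm_num),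
      Real.rpow_one, Real.sqrt_eq_rpow]
  calc ∫ u in (0:ℝ)..1, (∑ i, (Psi x u i - Psi y u i) ^ 2)
      = ∑ i, ∫ u in (0:ℝ)..1, (Psi x u i - Psi y u i) ^ 2 :=
        intervalIntegral.integral_finsetSum fun i _ => hint i
    _ ≤ ∑ _i : Fin d, 2 * (√d * √(∑ i, (x i - y i) ^ 2)) :=
        Finset.sum_le_sum fun i _ => (integral_sq_Psi_sub_Psi_le hx hy i).trans
          (by linarith [abs_partSum_sub_partSum_le x y i, abs_partSum_sub_partSum_le x y (i + 1)])
    _ = 2 * (d : ℝ) ^ ((3 : ℝ) / 2) * √(∑ i, (x i - y i) ^ 2) := by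
        rw [Finset.sum_const, Finset.card_univ, Fintype.card_fin, nsmul_eq_mul, hpow]; ring

/-- For `x, y` in the simplex `S_d`,
`∫₀¹ ‖Ψ(u,x) − Ψ(u,y)‖₂² du ≤ 2 d^{3/2} ‖x − y‖₂`. -/
theorem integral_sq_norm_Psi_sub_le
    (d : ℕ) (hd : 1 ≤ d) (x y : Fin d → ℝ)
    (hx : x ∈ stdSimplex ℝ (Fin d)) (hy : y ∈ stdSimplex ℝ (Fin d)) :
    ∫ u in (0:ℝ)..1, (∑ i, (Psi x u i - Psi y u i) ^ 2)
      ≤ 2 * (d : ℝ) ^ ((3 : ℝ) / 2) * Real.sqrt (∑ i, (x i - y i) ^ 2) :=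
  integral_sq_norm_Psi_sub_le_general d x y hx hy
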